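/- arXiv:1909.13511 — 5 statements merged into one kernel-verified Lean document; each statement's English description precedes it below -/
import Mathlib

section
/- Let A, B be real symmetric positive semidefinite n×n matrices with Ker(A) = Ker(B) = W and α⟨Bu,u⟩ ≤ ⟨Au,u⟩ ≤ β⟨Bu,u⟩ for all u, with α, β > 0. Consider the RSS scheme (u^{k+1} - u^k)/Δt + τB(u^{k+1} - u^k) + Au^k = 0. If τ ≥ β/2, then for every Δt > 0 the scheme is energy-stable: ⟨A u^{k+1}, u^{k+1}⟩ ≤ ⟨A u^k, u^k⟩ for all k. -/
/-!
Write `d = u^{k+1} - u^k`. Pairing the scheme with `d` gives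
`⟨A u^k, d⟩ = -Δt⁻¹ |d|² - τ ⟨B d, d⟩`, and by symmetry of `A`,
`⟨A u^{k+1}, u^{k+1}⟩ = ⟨A u^k, u^k⟩ + 2 ⟨A u^k, d⟩ + ⟨A d, d⟩`. Hence the energy changes by
`-2 Δt⁻¹ |d|² - (2τ ⟨B d, d⟩ - ⟨A d, d⟩)`, and `⟨A d, d⟩ ≤ β ⟨B d, d⟩ ≤ 2τ ⟨B d, d⟩`.
-/

open Matrix

namespace Matrix

variable {ι R : Type*} [Fintype ι]

theorem IsSymm.mulVec_dotProduct_comm [CommSemiring R] {A : Matrix ι ι R} (hA : A.IsSymm)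
    (x y : ι → R) : A *ᵥ x ⬝ᵥ y = A *ᵥ y ⬝ᵥ x := by
  rw [dotProduct_comm, dotProduct_mulVec, ← mulVec_transpose, hA.eq]

theorem IsSymm.mulVec_add_dotProduct_add [CommSemiring R] {A : Matrix ι ι R} (hA : A.IsSymm)
    (x d : ι → R) :
    A *ᵥ (x + d) ⬝ᵥ (x + d) = A *ᵥ x ⬝ᵥ x + 2 * (A *ᵥ x ⬝ᵥ d) + A *ᵥ d ⬝ᵥ d := by
  rw [mulVec_add, add_dotProduct, dotProduct_add, dotProduct_add, hA.mulVec_dotProduct_comm d x]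
  ring

theorem IsSymm.energy_step_eq [CommRing R] {A B : Matrix ι ι R} (hA : A.IsSymm) {c τ : R}
    {x d : ι → R} (hstep : c • d + τ • B *ᵥ d + A *ᵥ x = 0) :
    A *ᵥ (x + d) ⬝ᵥ (x + d)
      = A *ᵥ x ⬝ᵥ x - 2 * c * (d ⬝ᵥ d) - (2 * τ * (B *ᵥ d ⬝ᵥ d) - A *ᵥ d ⬝ᵥ d) := by
  have hpair : c * (d ⬝ᵥ d) + τ * (B *ᵥ d ⬝ᵥ d) + A *ᵥ x ⬝ᵥ d = 0 := by
    simpa only [add_dotProduct, smul_dotProduct, smul_eq_mul, zero_dotProduct]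
      using congrArg (· ⬝ᵥ d) hstep
  rw [hA.mulVec_add_dotProduct_add]
  linear_combination 2 * hpair

theorem IsSymm.energy_step_le {A B : Matrix ι ι ℝ} (hA : A.IsSymm) (hB : B.PosSemidef)
    {β τ c : ℝ} (hτ : β / 2 ≤ τ) (hc : 0 ≤ c) {x d : ι → ℝ}
    (hAB : A *ᵥ d ⬝ᵥ d ≤ β * (B *ᵥ d ⬝ᵥ d)) (hstep : c • d + τ • B *ᵥ d + A *ᵥ x = 0) :
    A *ᵥ (x + d) ⬝ᵥ (x + d) ≤ A *ᵥ x ⬝ᵥ x := by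
  have hdd : 0 ≤ d ⬝ᵥ d := by simpa using dotProduct_star_self_nonneg d
  have hBd : 0 ≤ B *ᵥ d ⬝ᵥ d := by simpa [dotProduct_comm] using hB.dotProduct_mulVec_nonneg d
  rw [hA.energy_step_eq hstep]
  nlinarith [mul_nonneg hc hdd]

end Matrix

theorem stmt_3_general {n : ℕ} (A B : Matrix (Fin n) (Fin n) ℝ)
    (hA : A.PosSemidef) (hB : B.PosSemidef)
    (α β : ℝ)
    (hspec : ∀ v : Fin n → ℝ,
      α * (B.mulVec v ⬝ᵥ v) ≤ A.mulVec v ⬝ᵥ v ∧ A.mulVec v ⬝ᵥ v ≤ β * (B.mulVec v ⬝ᵥ v))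
    (τ Δt : ℝ) (hτ : β / 2 ≤ τ) (hΔt : 0 < Δt)
    (u : ℕ → Fin n → ℝ)
    (hscheme : ∀ k, Δt⁻¹ • (u (k + 1) - u k)
      + τ • B.mulVec (u (k + 1) - u k) + A.mulVec (u k) = 0) :
    ∀ k : ℕ, A.mulVec (u (k + 1)) ⬝ᵥ u (k + 1) ≤ A.mulVec (u k) ⬝ᵥ u k := by
  intro k
  have hA_symm : A.IsSymm := isHermitian_iff_isSymm.mp hA.isHermitian
  simpa only [add_sub_cancel] using
    hA_symm.energy_step_le hB hτ (inv_nonneg.mpr hΔt.le) (hspec _).2 (hscheme k)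

theorem stmt_3 {n : ℕ} (A B : Matrix (Fin n) (Fin n) ℝ)
    (hA : A.PosSemidef) (hB : B.PosSemidef)
    (W : Submodule ℝ (Fin n → ℝ))
    (hkerA : ∀ v, A.mulVec v = 0 ↔ v ∈ W) (hkerB : ∀ v, B.mulVec v = 0 ↔ v ∈ W)
    (α β : ℝ) (hα : 0 < α) (hβ : 0 < β)
    (hspec : ∀ v : Fin n → ℝ,
      α * (B.mulVec v ⬝ᵥ v) ≤ A.mulVec v ⬝ᵥ v ∧ A.mulVec v ⬝ᵥ v ≤ β * (B.mulVec v ⬝ᵥ v))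
    (τ Δt : ℝ) (hτ : β / 2 ≤ τ) (hΔt : 0 < Δt)
    (u : ℕ → Fin n → ℝ)
    (hscheme : ∀ k, Δt⁻¹ • (u (k + 1) - u k)
      + τ • B.mulVec (u (k + 1) - u k) + A.mulVec (u k) = 0) :
    ∀ k : ℕ, A.mulVec (u (k + 1)) ⬝ᵥ u (k + 1) ≤ A.mulVec (u k) ⬝ᵥ u k :=
  stmt_3_general A B hA hB α β hspec τ Δt hτ hΔt u hscheme
end

section
/- Let A, B be real symmetric positive semidefinite n×n matrices with Ker(A) = Ker(B) = W and α⟨Bu,u⟩ ≤ ⟨Au,u⟩ ≤ β⟨Bu,u⟩ for all u, with α, β > 0. Consider the stabilized Crank-Nicolson scheme u^{k+1} - u^k + (τΔt/2) B(u^{k+1} - u^k) + Δt A u^k = 0. If τ ≥ β, then the scheme satisfies ⟨A u^{k+1}, u^{k+1}⟩ ≤ ⟨A u^k, u^k⟩ for every Δt > 0; if τ < β, the same holds provided 0 < Δt < 2 / ((1 - τ/β) ρ(A)). -/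
/-!
Pairing the scheme with the increment `d = u (k + 1) - u k` and using the symmetry of `A` gives
`Δt (E (k + 1) - E k) = Δt (⟨A d, d⟩ - τ ⟨B d, d⟩) - 2 ‖d‖²` for the energy `E k = ⟨A u k, u k⟩`.
If `τ ≥ β`, the spectral equivalence `⟨A d, d⟩ ≤ β ⟨B d, d⟩` makes the bracket nonpositive.
Otherwise the bracket is at most `(1 - τ / β) ⟨A d, d⟩ ≤ (1 - τ / β) ρ(A) ‖d‖²`, and the step-size
condition bounds this by `2 ‖d‖² / Δt`.
-/

open Matrix

section

variable {ι : Type*} [Fintype ι]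

lemma Matrix.IsHermitian.dotProduct_mulVec_self_le [DecidableEq ι] {A : Matrix ι ι ℝ}
    (hA : A.IsHermitian) {ρ : ℝ}
    (hρ : ρ ∈ upperBounds {r : ℝ | ∃ v : ι → ℝ, v ≠ 0 ∧ A *ᵥ v = r • v}) (x : ι → ℝ) :
    A *ᵥ x ⬝ᵥ x ≤ ρ * (x ⬝ᵥ x) := by
  have hM : (ρ • 1 - A).IsHermitian := (isHermitian_one.smul (IsSelfAdjoint.all ρ)).sub hA
  have hMpos : (ρ • 1 - A).PosSemidef := by
    refine hM.posSemidef_iff_eigenvalues_nonneg.mpr fun i => show (0 : ℝ) ≤ _ from ?_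
    set w : ι → ℝ := ⇑(hM.eigenvectorBasis i)
    have hw : w ≠ 0 := fun h =>
      hM.eigenvectorBasis.orthonormal.ne_zero i (by ext j; exact congrFun h j)
    have hAw : A *ᵥ w = (ρ - hM.eigenvalues i) • w := by
      have := hM.mulVec_eigenvectorBasis i
      rw [sub_mulVec, smul_mulVec, one_mulVec] at this
      rw [sub_smul, ← this, sub_sub_cancel]
    linarith [hρ ⟨w, hw, hAw⟩]
  have := hMpos.dotProduct_mulVec_nonneg x
  rw [star_trivial, sub_mulVec, smul_mulVec, one_mulVec, dotProduct_sub, dotProduct_smul,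
    smul_eq_mul, dotProduct_comm x (A *ᵥ x)] at this
  linarith

lemma Matrix.IsSymm.dotProduct_mulVec_add_self {R : Type*} [CommRing R] {A : Matrix ι ι R}
    (hA : A.IsSymm) (x d : ι → R) :
    A *ᵥ (x + d) ⬝ᵥ (x + d) = A *ᵥ x ⬝ᵥ x + 2 * (A *ᵥ x ⬝ᵥ d) + A *ᵥ d ⬝ᵥ d := by
  have hsymm : A *ᵥ d ⬝ᵥ x = A *ᵥ x ⬝ᵥ d := by
    rw [dotProduct_comm, dotProduct_mulVec, ← mulVec_transpose, hA.eq]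
  rw [mulVec_add, add_dotProduct, dotProduct_add, dotProduct_add, hsymm]
  ring

lemma Matrix.IsSymm.crankNicolson_energy_step {A B : Matrix ι ι ℝ} (hA : A.IsSymm)
    {τ Δt : ℝ} {x y : ι → ℝ}
    (h : (y - x) + (τ * Δt / 2) • B *ᵥ (y - x) + Δt • A *ᵥ x = 0) :
    Δt * (A *ᵥ y ⬝ᵥ y - A *ᵥ x ⬝ᵥ x) =
      Δt * (A *ᵥ (y - x) ⬝ᵥ (y - x) - τ * (B *ᵥ (y - x) ⬝ᵥ (y - x)))
        - 2 * ((y - x) ⬝ᵥ (y - x)) := by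
  set d := y - x
  have hdot := congrArg (· ⬝ᵥ d) h
  simp only [add_dotProduct, smul_dotProduct, smul_eq_mul, zero_dotProduct] at hdot
  rw [show y = x + d by simp [d], hA.dotProduct_mulVec_add_self]
  linear_combination 2 * hdot

end

lemma crankNicolson_increment_bound {a b s ρ β τ Δt : ℝ} (hβ : 0 < β) (hτ : 0 ≤ τ)
    (hΔt : 0 < Δt) (hb : 0 ≤ b) (hs : 0 ≤ s) (hab : a ≤ β * b) (has : a ≤ ρ * s)
    (hcond : β ≤ τ ∨ (τ < β ∧ Δt < 2 / ((1 - τ / β) * ρ))) :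
    Δt * (a - τ * b) ≤ 2 * s := by
  rcases hcond with hτβ | ⟨hτβ, hΔtρ⟩
  · have : a - τ * b ≤ 0 := by nlinarith [mul_nonneg (sub_nonneg.mpr hτβ) hb]
    linarith [mul_nonpos_of_nonneg_of_nonpos hΔt.le this]
  · have hθ : 0 < 1 - τ / β := by rw [sub_pos, div_lt_one hβ]; exact hτβ
    have hc : 0 < (1 - τ / β) * ρ := by
      by_contra! hc
      linarith [div_nonpos_of_nonneg_of_nonpos zero_le_two hc]
    have hΔtc : Δt * ((1 - τ / β) * ρ) < 2 := (lt_div_iff₀ hc).mp hΔtρ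
    have hdamp : a - τ * b ≤ (1 - τ / β) * a := by
      have : τ * (a / β) ≤ τ * b := mul_le_mul_of_nonneg_left ((div_le_iff₀' hβ).mpr hab) hτ
      linarith [show τ / β * a = τ * (a / β) by ring]
    have hρs : (1 - τ / β) * a ≤ (1 - τ / β) * ρ * s := by
      rw [mul_assoc]; exact mul_le_mul_of_nonneg_left has hθ.le
    calc Δt * (a - τ * b) ≤ Δt * ((1 - τ / β) * ρ) * s := by
          rw [mul_assoc Δt]; exact mul_le_mul_of_nonneg_left (hdamp.trans hρs) hΔt.le
      _ ≤ 2 * s := mul_le_mul_of_nonneg_right hΔtc.le hs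

theorem stmt_5_general {n : ℕ} (A B : Matrix (Fin n) (Fin n) ℝ)
    (hA : A.PosSemidef) (hB : B.PosSemidef)
    (α β : ℝ) (hβ : 0 < β)
    (hspec : ∀ v : Fin n → ℝ,
      α * (B.mulVec v ⬝ᵥ v) ≤ A.mulVec v ⬝ᵥ v ∧ A.mulVec v ⬝ᵥ v ≤ β * (B.mulVec v ⬝ᵥ v))
    (ρA : ℝ) (hρ : IsGreatest {r : ℝ | ∃ v : Fin n → ℝ, v ≠ 0 ∧ A.mulVec v = r • v} ρA)
    (τ Δt : ℝ) (hτ0 : 0 ≤ τ) (hΔt : 0 < Δt)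
    (hcond : β ≤ τ ∨ (τ < β ∧ Δt < 2 / ((1 - τ / β) * ρA)))
    (u : ℕ → Fin n → ℝ)
    (hscheme : ∀ k, (u (k + 1) - u k)
      + (τ * Δt / 2) • B.mulVec (u (k + 1) - u k) + Δt • A.mulVec (u k) = 0) :
    ∀ k : ℕ, A.mulVec (u (k + 1)) ⬝ᵥ u (k + 1) ≤ A.mulVec (u k) ⬝ᵥ u k := by
  intro k
  have hstep := (isHermitian_iff_isSymm.mp hA.1).crankNicolson_energy_step (hscheme k)
  set d := u (k + 1) - u k
  have hBd : 0 ≤ B *ᵥ d ⬝ᵥ d := by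
    simpa [dotProduct_comm] using hB.dotProduct_mulVec_nonneg d
  have hincr := crankNicolson_increment_bound hβ hτ0 hΔt hBd
    (by simpa using dotProduct_self_star_nonneg d) (hspec d).2
    (hA.1.dotProduct_mulVec_self_le hρ.2 d) hcond
  exact sub_nonpos.mp (nonpos_of_mul_nonpos_right (by linarith) hΔt)

theorem stmt_5 {n : ℕ} (A B : Matrix (Fin n) (Fin n) ℝ)
    (hA : A.PosSemidef) (hB : B.PosSemidef)
    (W : Submodule ℝ (Fin n → ℝ))
    (hkerA : ∀ v, A.mulVec v = 0 ↔ v ∈ W) (hkerB : ∀ v, B.mulVec v = 0 ↔ v ∈ W)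
    (α β : ℝ) (hα : 0 < α) (hβ : 0 < β)
    (hspec : ∀ v : Fin n → ℝ,
      α * (B.mulVec v ⬝ᵥ v) ≤ A.mulVec v ⬝ᵥ v ∧ A.mulVec v ⬝ᵥ v ≤ β * (B.mulVec v ⬝ᵥ v))
    (ρA : ℝ) (hρ : IsGreatest {r : ℝ | ∃ v : Fin n → ℝ, v ≠ 0 ∧ A.mulVec v = r • v} ρA)
    (τ Δt : ℝ) (hτ0 : 0 ≤ τ) (hΔt : 0 < Δt)
    (hcond : β ≤ τ ∨ (τ < β ∧ Δt < 2 / ((1 - τ / β) * ρA)))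
    (u : ℕ → Fin n → ℝ)
    (hscheme : ∀ k, (u (k + 1) - u k)
      + (τ * Δt / 2) • B.mulVec (u (k + 1) - u k) + Δt • A.mulVec (u k) = 0) :
    ∀ k : ℕ, A.mulVec (u (k + 1)) ⬝ᵥ u (k + 1) ≤ A.mulVec (u k) ⬝ᵥ u k :=
  stmt_5_general A B hA hB α β hβ hspec ρA hρ τ Δt hτ0 hΔt hcond u hscheme
end

section
/- Let A be an n×n real matrix with Ker(A) = span{1} (where 1 = (1,...,1)ᵀ) such that I + ΔtA satisfies the discrete maximum principle (i.e. (I+ΔtA)^{-1} ≥ 0 entrywise), and let ε, Δt > 0. Define the splitting scheme: u* = (I + ΔtA)^{-1} u^k, then u^{k+1}_i = u*_i / sqrt(e^{-2Δt/ε²} + (u*_i)²(1 - e^{-2Δt/ε²})). If |u⁰_i| ≤ 1 for all i, then |u^k_i| ≤ 1 for all i and all k ≥ 0. -/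
/-! The scheme alternates an implicit diffusion step and the exact flow of the reaction
`u' = (u - u³) / ε²`. Since `A` annihilates constants, `(I + Δt A)⁻¹` fixes the constant vector,
so together with its entrywise nonnegativity it is row-stochastic and hence does not increase the
sup norm. The reaction flow maps `[-1, 1]` into itself because `±1` are equilibria; in closed form,
`(a + x² (1 - a)) - x² = a (1 - x²) ≥ 0` whenever `x² ≤ 1` and `a ≥ 0`. -/

open Matrix

/-- The exact solution at time `Δt` of `u' = (u - u³) / ε²` from `u(0) = x`,
where `a = exp (-2 Δt / ε²)`. -/
noncomputable def allenCahnReactionFlow (a x : ℝ) : ℝ :=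
  x / Real.sqrt (a + x ^ 2 * (1 - a))

theorem abs_allenCahnReactionFlow_le_one {a x : ℝ} (ha : 0 ≤ a) (hx : |x| ≤ 1) :
    |allenCahnReactionFlow a x| ≤ 1 := by
  have hx2 : x ^ 2 ≤ 1 := by simpa only [sq_abs, one_pow] using pow_le_pow_left₀ (abs_nonneg x) hx 2
  have hle : |x| ≤ Real.sqrt (a + x ^ 2 * (1 - a)) := by
    rw [← Real.sqrt_sq_eq_abs]
    exact Real.sqrt_le_sqrt (by linarith [mul_nonneg ha (sub_nonneg.2 hx2)])
  rw [allenCahnReactionFlow, abs_div, abs_of_nonneg (Real.sqrt_nonneg _)]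
  exact div_le_one_of_le₀ hle (Real.sqrt_nonneg _)

theorem abs_mulVec_le_of_mem_rowStochastic {ι : Type*} [Fintype ι] [DecidableEq ι]
    {M : Matrix ι ι ℝ} (hM : M ∈ rowStochastic ℝ ι) {v : ι → ℝ} {c : ℝ} (hv : ∀ j, |v j| ≤ c)
    (i : ι) : |(M *ᵥ v) i| ≤ c :=
  calc |(M *ᵥ v) i| = |∑ j, M i j * v j| := rfl
    _ ≤ ∑ j, |M i j * v j| := Finset.abs_sum_le_sum_abs _ _
    _ ≤ ∑ j, M i j * c := Finset.sum_le_sum fun j _ => by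
        rw [abs_mul, abs_of_nonneg (nonneg_of_mem_rowStochastic hM)]
        exact mul_le_mul_of_nonneg_left (hv j) (nonneg_of_mem_rowStochastic hM)
    _ = c := by rw [← Finset.sum_mul, sum_row_of_mem_rowStochastic hM, one_mul]

theorem inv_mem_rowStochastic {ι : Type*} [Fintype ι] [DecidableEq ι] {M : Matrix ι ι ℝ}
    (hM : IsUnit M) (hM1 : M *ᵥ 1 = 1) (hMinv : ∀ i j, 0 ≤ M⁻¹ i j) :
    M⁻¹ ∈ rowStochastic ℝ ι := by
  have := hM.invertible
  exact mem_rowStochastic.2 ⟨hMinv, inv_mulVec_eq_vec hM1.symm⟩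

theorem one_add_smul_mulVec_one {ι : Type*} [Fintype ι] [DecidableEq ι] {A : Matrix ι ι ℝ}
    (hA : A *ᵥ 1 = 0) (t : ℝ) : (1 + t • A) *ᵥ 1 = 1 := by
  rw [add_mulVec, one_mulVec, smul_mulVec, hA, smul_zero, add_zero]

theorem stmt_8_general {n : ℕ} (A : Matrix (Fin n) (Fin n) ℝ) (Δt ε : ℝ)
    (hker : ∀ v : Fin n → ℝ, A.mulVec v = 0 ↔ ∃ c : ℝ, v = fun _ => c)
    (hM : IsUnit (1 + Δt • A))
    (hMinv : ∀ i j, 0 ≤ ((1 + Δt • A)⁻¹) i j)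
    (u : ℕ → Fin n → ℝ) (ustar : ℕ → Fin n → ℝ)
    (hstar : ∀ k, (1 + Δt • A).mulVec (ustar k) = u k)
    (hstep : ∀ k i, u (k + 1) i = ustar k i /
      Real.sqrt (Real.exp (-2 * Δt / ε ^ 2)
        + (ustar k i) ^ 2 * (1 - Real.exp (-2 * Δt / ε ^ 2))))
    (hu0 : ∀ i, |u 0 i| ≤ 1) :
    ∀ k i, |u k i| ≤ 1 := by
  have := hM.invertible
  have hA1 : A *ᵥ 1 = 0 := (hker 1).2 ⟨1, rfl⟩
  have hstoch := inv_mem_rowStochastic hM (one_add_smul_mulVec_one hA1 Δt) hMinv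
  intro k
  induction k with
  | zero => exact hu0
  | succ k ih =>
    intro i
    have hustar : ustar k = (1 + Δt • A)⁻¹ *ᵥ u k := (inv_mulVec_eq_vec (hstar k).symm).symm
    rw [hstep]
    exact abs_allenCahnReactionFlow_le_one (Real.exp_pos _).le
      (hustar ▸ abs_mulVec_le_of_mem_rowStochastic hstoch ih i)

theorem stmt_8 {n : ℕ} (A : Matrix (Fin n) (Fin n) ℝ) (Δt ε : ℝ)
    (hΔt : 0 < Δt) (hε : 0 < ε)
    (hker : ∀ v : Fin n → ℝ, A.mulVec v = 0 ↔ ∃ c : ℝ, v = fun _ => c)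
    (hM : IsUnit (1 + Δt • A))
    (hMinv : ∀ i j, 0 ≤ ((1 + Δt • A)⁻¹) i j)
    (u : ℕ → Fin n → ℝ) (ustar : ℕ → Fin n → ℝ)
    (hstar : ∀ k, (1 + Δt • A).mulVec (ustar k) = u k)
    (hstep : ∀ k i, u (k + 1) i = ustar k i /
      Real.sqrt (Real.exp (-2 * Δt / ε ^ 2)
        + (ustar k i) ^ 2 * (1 - Real.exp (-2 * Δt / ε ^ 2))))
    (hu0 : ∀ i, |u 0 i| ≤ 1) :
    ∀ k i, |u k i| ≤ 1 :=
  stmt_8_general A Δt ε hker hM hMinv u ustar hstar hstep hu0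
end

section
/- Let A, B be symmetric positive semidefinite n×n matrices with Ker(A) = Ker(B) = W and α⟨Bu,u⟩ ≤ ⟨Au,u⟩ ≤ β⟨Bu,u⟩ for all u (α, β > 0). Let f : ℝ → ℝ be C¹ with |f'| ≤ L, let F be a primitive of f, ε > 0, and define E(u) = (1/2)⟨Au,u⟩ + (1/ε²)Σᵢ F(uᵢ). Consider the RSS-IMEX scheme (u^{k+1}-u^k)/Δt + τB(u^{k+1}-u^k) + Au^k + (1/ε²)f(u^k) = 0 (f applied componentwise). If W = {0}, τ ≥ β/2, and (τ/β - 1/2)λ_min(A) - L/(2ε²) ≥ 0 (λ_min(A) the smallest eigenvalue of A), then E(u^{k+1}) ≤ E(u^k) for every Δt > 0 and every k. -/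
/-!
Write `v = u (k+1) - u k`. Because `|f'| ≤ L`, the second-order Taylor bound gives
`∑ F(u^{k+1}_i) - ∑ F(u^k_i) ≤ ⟨f(u^k), v⟩ + (L/2)|v|²`, and the quadratic part of the energy
expands as `⟨A u^k, v⟩ + ½⟨Av, v⟩`. Testing the scheme against `v` cancels the first-order terms,
leaving `-|v|²/Δt - τ⟨Bv, v⟩ + ½⟨Av, v⟩ + L/(2ε²)|v|²`. Since `⟨Av, v⟩ ≤ β⟨Bv, v⟩` and
`⟨Av, v⟩ ≥ λ_min |v|²`, this is at most `-((τ/β - ½) λ_min - L/(2ε²)) |v|² ≤ 0`.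
-/

open Matrix

lemma image_le_image_of_hasDerivAt_mul_sub_nonpos {g g' : ℝ → ℝ} {a : ℝ}
    (hg : ∀ x, HasDerivAt g (g' x) x) (hsign : ∀ x, g' x * (x - a) ≤ 0) (b : ℝ) :
    g b ≤ g a := by
  have hcont : Continuous g := continuous_iff_continuousAt.2 fun x => (hg x).continuousAt
  rcases le_total a b with hab | hba
  · refine antitoneOn_of_hasDerivWithinAt_nonpos (convex_Ici a) hcont.continuousOn
      (fun x _ => (hg x).hasDerivWithinAt) (fun x hx => ?_) Set.self_mem_Ici hab hab
    rw [interior_Ici] at hx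
    exact nonpos_of_mul_nonpos_left (hsign x) (sub_pos.2 hx)
  · refine monotoneOn_of_hasDerivWithinAt_nonneg (convex_Iic a) hcont.continuousOn
      (fun x _ => (hg x).hasDerivWithinAt) (fun x hx => ?_) hba Set.self_mem_Iic hba
    rw [interior_Iic] at hx
    exact nonneg_of_mul_nonpos_left (hsign x) (sub_neg.2 hx)

lemma sub_le_mul_sub_add_sq_of_abs_deriv_le {f F : ℝ → ℝ} {K : ℝ}
    (hF : ∀ x, HasDerivAt F (f x) x) (hf : Differentiable ℝ f) (hK : ∀ x, |deriv f x| ≤ K)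
    (a b : ℝ) : F b - F a ≤ f a * (b - a) + K / 2 * (b - a) ^ 2 := by
  have hlip : ∀ x, |f x - f a| ≤ K * |x - a| := fun x =>
    convex_univ.norm_image_sub_le_of_norm_deriv_le (fun y _ => hf y) (fun y _ => hK y)
      trivial trivial
  -- `g x = F x - f a * x - K / 2 * (x - a) ^ 2` is maximal at `a`: `g'` has the sign of `a - x`.
  have hg : ∀ x, HasDerivAt (fun x => F x - f a * x - K / 2 * (x - a) ^ 2)
      (f x - f a - K * (x - a)) x := fun x => by
    refine (((hF x).sub ((hasDerivAt_id x).const_mul (f a))).sub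
      (((hasDerivAt_id x).sub_const a).pow 2 |>.const_mul (K / 2))).congr_deriv ?_
    simp only [id_eq]
    ring
  have hsign : ∀ x, (f x - f a - K * (x - a)) * (x - a) ≤ 0 := fun x => by
    have := calc (f x - f a) * (x - a) ≤ |f x - f a| * |x - a| :=
          (le_abs_self _).trans (abs_mul _ _).le
      _ ≤ K * |x - a| * |x - a| := by gcongr; exact hlip x
      _ = K * (x - a) ^ 2 := by rw [mul_assoc, abs_mul_abs_self, sq]
    linarith
  have := image_le_image_of_hasDerivAt_mul_sub_nonpos hg hsign b
  simp only [sub_self] at this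
  linarith

lemma sum_sub_sum_le_dotProduct_add {ι : Type*} [Fintype ι] {f F : ℝ → ℝ} {K : ℝ}
    (hF : ∀ x, HasDerivAt F (f x) x) (hf : Differentiable ℝ f) (hK : ∀ x, |deriv f x| ≤ K)
    (a v : ι → ℝ) :
    ∑ i, F ((a + v) i) - ∑ i, F (a i) ≤ (fun i => f (a i)) ⬝ᵥ v + K / 2 * (v ⬝ᵥ v) := by
  calc ∑ i, F ((a + v) i) - ∑ i, F (a i)
      ≤ ∑ i, (f (a i) * v i + K / 2 * (v i * v i)) := by
        rw [← Finset.sum_sub_distrib]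
        refine Finset.sum_le_sum fun i _ => ?_
        simpa [sq] using sub_le_mul_sub_add_sq_of_abs_deriv_le hF hf hK (a i) ((a + v) i)
    _ = (fun i => f (a i)) ⬝ᵥ v + K / 2 * (v ⬝ᵥ v) := by
        simp only [dotProduct, Finset.sum_add_distrib, Finset.mul_sum]

lemma Matrix.IsSymm.mulVec_dotProduct_comm_s9 {ι R : Type*} [Fintype ι] [CommSemiring R]
    {A : Matrix ι ι R} (hA : A.IsSymm) (x y : ι → R) : A *ᵥ x ⬝ᵥ y = A *ᵥ y ⬝ᵥ x := by
  rw [dotProduct_comm, dotProduct_mulVec, ← mulVec_transpose, hA.eq]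

lemma Matrix.IsSymm.mulVec_add_dotProduct_add_s9 {ι R : Type*} [Fintype ι] [CommRing R]
    {A : Matrix ι ι R} (hA : A.IsSymm) (x y : ι → R) :
    A *ᵥ (x + y) ⬝ᵥ (x + y) = A *ᵥ x ⬝ᵥ x + 2 * (A *ᵥ x ⬝ᵥ y) + A *ᵥ y ⬝ᵥ y := by
  rw [mulVec_add, add_dotProduct, dotProduct_add, dotProduct_add, hA.mulVec_dotProduct_comm_s9 y x]
  ring

lemma Matrix.IsHermitian.mul_dotProduct_self_le {ι : Type*} [Fintype ι] [DecidableEq ι]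
    {A : Matrix ι ι ℝ} (hA : A.IsHermitian) {c : ℝ}
    (hc : c ∈ lowerBounds {r : ℝ | ∃ v : ι → ℝ, v ≠ 0 ∧ A *ᵥ v = r • v}) (w : ι → ℝ) :
    c * (w ⬝ᵥ w) ≤ A *ᵥ w ⬝ᵥ w := by
  have hM : (A - c • 1).IsHermitian := hA.sub (isHermitian_one.smul (IsSelfAdjoint.all c))
  have hMmulVec : ∀ x, (A - c • 1) *ᵥ x = A *ᵥ x - c • x := fun x => by
    rw [sub_mulVec, smul_mulVec, one_mulVec]
  -- An eigenvector of `A - c • 1` is an eigenvector of `A` with eigenvalue shifted by `c`.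
  have hpsd : (A - c • 1).PosSemidef := by
    refine hM.posSemidef_iff_eigenvalues_nonneg.2 fun i => ?_
    set e : ι → ℝ := ⇑(hM.eigenvectorBasis i)
    have he : e ≠ 0 := fun h =>
      hM.eigenvectorBasis.orthonormal.ne_zero i (by ext j; exact congrFun h j)
    have hAe : A *ᵥ e = (hM.eigenvalues i + c) • e := by
      rw [add_smul, ← sub_eq_iff_eq_add, ← hMmulVec]
      exact hM.mulVec_eigenvectorBasis i
    simpa using hc ⟨e, he, hAe⟩
  have := hpsd.dotProduct_mulVec_nonneg w
  rw [star_trivial, hMmulVec, dotProduct_sub, dotProduct_smul, smul_eq_mul,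
    dotProduct_comm w] at this
  linarith

theorem stmt_9_general {n : ℕ} (A B : Matrix (Fin n) (Fin n) ℝ)
    (hA : A.PosSemidef)
    (α β : ℝ) (hβ : 0 < β)
    (hspec : ∀ v : Fin n → ℝ,
      α * (B.mulVec v ⬝ᵥ v) ≤ A.mulVec v ⬝ᵥ v ∧ A.mulVec v ⬝ᵥ v ≤ β * (B.mulVec v ⬝ᵥ v))
    (f F : ℝ → ℝ) (L : ℝ)
    (hF : ∀ x, HasDerivAt F (f x) x)
    (hf : Differentiable ℝ f) (hL : ∀ x, |deriv f x| ≤ L)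
    (ε τ Δt : ℝ) (hΔt : 0 < Δt)
    (lamMin : ℝ) (hlam : IsLeast {r : ℝ | ∃ v : Fin n → ℝ, v ≠ 0 ∧ A.mulVec v = r • v} lamMin)
    (hτ : β / 2 ≤ τ)
    (hcond : 0 ≤ (τ / β - 1 / 2) * lamMin - L / (2 * ε ^ 2))
    (u : ℕ → Fin n → ℝ)
    (hscheme : ∀ k, Δt⁻¹ • (u (k + 1) - u k)
      + τ • B.mulVec (u (k + 1) - u k) + A.mulVec (u k)
      + (1 / ε ^ 2) • (fun i => f (u k i)) = 0)
    (E : (Fin n → ℝ) → ℝ)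
    (hE : ∀ v, E v = (1 / 2) * (A.mulVec v ⬝ᵥ v) + (1 / ε ^ 2) * ∑ i, F (v i)) :
    ∀ k : ℕ, E (u (k + 1)) ≤ E (u k) := by
  intro k
  set a := u k
  set v := u (k + 1) - u k
  have hstep : u (k + 1) = a + v := (add_sub_cancel a _).symm
  have hscheme_v : Δt⁻¹ * (v ⬝ᵥ v) + τ * (B *ᵥ v ⬝ᵥ v) + A *ᵥ a ⬝ᵥ v
      + 1 / ε ^ 2 * ((fun i => f (a i)) ⬝ᵥ v) = 0 := by
    simpa only [add_dotProduct, smul_dotProduct, smul_eq_mul, zero_dotProduct]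
      using congrArg (· ⬝ᵥ v) (hscheme k)
  have hpot := mul_le_mul_of_nonneg_left (sum_sub_sum_le_dotProduct_add hF hf hL a v)
    (by positivity : (0 : ℝ) ≤ 1 / ε ^ 2)
  have hτβ : 0 ≤ τ / β - 1 / 2 := by rw [sub_nonneg, le_div_iff₀ hβ]; linarith
  have hAB : τ / β * (A *ᵥ v ⬝ᵥ v) ≤ τ * (B *ᵥ v ⬝ᵥ v) := by
    have := mul_le_mul_of_nonneg_left (hspec v).2 (by linarith : 0 ≤ τ / β)
    rwa [← mul_assoc, div_mul_cancel₀ τ hβ.ne'] at this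
  have hmin := mul_le_mul_of_nonneg_left (hA.1.mul_dotProduct_self_le hlam.2 v) hτβ
  have hvv : 0 ≤ v ⬝ᵥ v := dotProduct_self_star_nonneg v
  rw [hE, hE, hstep, (isHermitian_iff_isSymm.1 hA.1).mulVec_add_dotProduct_add_s9 a v]
  linear_combination hpot + hscheme_v + hAB + hmin + mul_nonneg hcond hvv
    + mul_nonneg (inv_nonneg.2 hΔt.le) hvv

theorem stmt_9 {n : ℕ} (A B : Matrix (Fin n) (Fin n) ℝ)
    (hA : A.PosSemidef) (hB : B.PosSemidef)
    (hkerA : ∀ v : Fin n → ℝ, A.mulVec v = 0 → v = 0)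
    (hkerB : ∀ v : Fin n → ℝ, B.mulVec v = 0 → v = 0)
    (α β : ℝ) (hα : 0 < α) (hβ : 0 < β)
    (hspec : ∀ v : Fin n → ℝ,
      α * (B.mulVec v ⬝ᵥ v) ≤ A.mulVec v ⬝ᵥ v ∧ A.mulVec v ⬝ᵥ v ≤ β * (B.mulVec v ⬝ᵥ v))
    (f F : ℝ → ℝ) (L : ℝ)
    (hF : ∀ x, HasDerivAt F (f x) x)
    (hf : Differentiable ℝ f) (hL : ∀ x, |deriv f x| ≤ L)
    (ε τ Δt : ℝ) (hε : 0 < ε) (hΔt : 0 < Δt)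
    (lamMin : ℝ) (hlam : IsLeast {r : ℝ | ∃ v : Fin n → ℝ, v ≠ 0 ∧ A.mulVec v = r • v} lamMin)
    (hτ : β / 2 ≤ τ)
    (hcond : 0 ≤ (τ / β - 1 / 2) * lamMin - L / (2 * ε ^ 2))
    (u : ℕ → Fin n → ℝ)
    (hscheme : ∀ k, Δt⁻¹ • (u (k + 1) - u k)
      + τ • B.mulVec (u (k + 1) - u k) + A.mulVec (u k)
      + (1 / ε ^ 2) • (fun i => f (u k i)) = 0)
    (E : (Fin n → ℝ) → ℝ)
    (hE : ∀ v, E v = (1 / 2) * (A.mulVec v ⬝ᵥ v) + (1 / ε ^ 2) * ∑ i, F (v i)) :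
    ∀ k : ℕ, E (u (k + 1)) ≤ E (u k) :=
  stmt_9_general A B hA α β hβ hspec f F L hF hf hL ε τ Δt hΔt lamMin hlam hτ hcond u hscheme E hE
end

section
/- Let A, B be symmetric positive semidefinite with Ker(A) = Ker(B) = {0} and α⟨Bu,u⟩ ≤ ⟨Au,u⟩ ≤ β⟨Bu,u⟩ (α,β > 0). For the RSS-IMEX Allen-Cahn scheme with 0 ≤ τ < β/2, energy decrease E(u^{k+1}) ≤ E(u^k) holds provided 0 < Δt < 1 / (L/(2ε²) - (τ/β - 1/2)ρ(A)), where ρ(A) is the spectral radius of A. -/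
/-!
Testing the scheme against `w = u (k + 1) - u k` gives
`⟪A u + ε⁻² f(u), w⟫ = -|w|² / Δt - τ ⟪B w, w⟫`. Because `f` is `L`-Lipschitz,
`E (u + w) ≤ E u + ⟪A u + ε⁻² f(u), w⟫ + ½ ⟪A w, w⟫ + L / (2 ε²) |w|²`.
The stabilisation absorbs part of the quadratic form, `τ ⟪B w, w⟫ ≥ (τ / β) ⟪A w, w⟫`, and
`⟪A w, w⟫ ≤ ρ(A) |w|²`, so the energy changes by at most
`(L / (2 ε²) - (τ / β - ½) ρ(A) - 1 / Δt) |w|²`, which the step-size condition makes negative.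
-/

open Matrix NNReal Set

variable {ι : Type*} [Fintype ι]

theorem sub_le_of_hasDerivAt_of_lipschitzWith {f F : ℝ → ℝ} {K : ℝ≥0}
    (hF : ∀ x, HasDerivAt F (f x) x) (hf : LipschitzWith K f) (a b : ℝ) :
    F b - F a ≤ f a * (b - a) + K / 2 * (b - a) ^ 2 := by
  set φ : ℝ → ℝ := fun x => F x - f a * (x - a) - K / 2 * (x - a) ^ 2
  have hφ' : ∀ x, HasDerivAt φ (f x - f a - K * (x - a)) x := fun x => by
    have hx := (hasDerivAt_id' x).sub_const a
    exact (((hF x).sub (hx.const_mul (f a))).sub ((hx.pow 2).const_mul (K / 2 : ℝ))).congr_deriv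
      (by ring)
  have hfa : ∀ x, |f x - f a| ≤ K * |x - a| := fun x => by
    simpa only [Real.dist_eq] using hf.dist_le_mul x a
  have hφc : Continuous φ := continuous_iff_continuousAt.2 fun x => (hφ' x).continuousAt
  suffices φ b ≤ φ a by simp only [φ, sub_self] at this; linarith
  rcases le_total a b with hab | hba
  · refine antitoneOn_of_hasDerivWithinAt_nonpos (convex_Ici a) hφc.continuousOn
      (fun x _ => (hφ' x).hasDerivWithinAt) (fun x hx => ?_) self_mem_Ici hab hab
    rw [interior_Ici] at hx
    have := hfa x
    rw [abs_of_pos (sub_pos.2 (mem_Ioi.1 hx))] at this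
    linarith [le_abs_self (f x - f a)]
  · refine monotoneOn_of_hasDerivWithinAt_nonneg (convex_Iic a) hφc.continuousOn
      (fun x _ => (hφ' x).hasDerivWithinAt) (fun x hx => ?_) hba self_mem_Iic hba
    rw [interior_Iic] at hx
    have := hfa x
    rw [abs_of_neg (sub_neg.2 (mem_Iio.1 hx))] at this
    linarith [neg_abs_le (f x - f a)]

theorem Matrix.IsHermitian.mulVec_dotProduct_comm {A : Matrix ι ι ℝ} (hA : A.IsHermitian)
    (v w : ι → ℝ) : A *ᵥ v ⬝ᵥ w = A *ᵥ w ⬝ᵥ v := by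
  rw [dotProduct_comm, dotProduct_mulVec, ← mulVec_transpose,
    ← conjTranspose_eq_transpose_of_trivial, hA]

theorem Matrix.IsHermitian.mulVec_dotProduct_le_of_mem_upperBounds [DecidableEq ι]
    {A : Matrix ι ι ℝ} (hA : A.IsHermitian) {ρ : ℝ}
    (hρ : ρ ∈ upperBounds {r : ℝ | ∃ v : ι → ℝ, v ≠ 0 ∧ A *ᵥ v = r • v}) (v : ι → ℝ) :
    A *ᵥ v ⬝ᵥ v ≤ ρ * (v ⬝ᵥ v) := by
  have hM : (ρ • (1 : Matrix ι ι ℝ) - A).PosSemidef := by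
    have hMh : (ρ • (1 : Matrix ι ι ℝ) - A).IsHermitian :=
      (isHermitian_one.smul (IsSelfAdjoint.all ρ)).sub hA
    refine hMh.posSemidef_iff_eigenvalues_nonneg.2 fun i => show (0 : ℝ) ≤ _ from ?_
    set e := hMh.eigenvectorBasis i
    have he : A *ᵥ ⇑e = (ρ - hMh.eigenvalues i) • ⇑e := by
      have := hMh.mulVec_eigenvectorBasis i
      rw [sub_mulVec, smul_mulVec, one_mulVec] at this
      rw [sub_smul, ← this]; abel
    have := hρ ⟨e, fun h => hMh.eigenvectorBasis.orthonormal.ne_zero i (by simpa using h), he⟩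
    linarith
  have := hM.dotProduct_mulVec_nonneg v
  rw [sub_mulVec, smul_mulVec, one_mulVec, dotProduct_sub, dotProduct_smul, smul_eq_mul,
    star_trivial, dotProduct_comm v (A *ᵥ v)] at this
  linarith

noncomputable def allenCahnEnergy (A : Matrix ι ι ℝ) (ε : ℝ) (F : ℝ → ℝ) (v : ι → ℝ) : ℝ :=
  1 / 2 * (A *ᵥ v ⬝ᵥ v) + 1 / ε ^ 2 * ∑ i, F (v i)

theorem allenCahnEnergy_add_le {A : Matrix ι ι ℝ} (hA : A.IsHermitian) {f F : ℝ → ℝ} {K : ℝ≥0}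
    (hF : ∀ x, HasDerivAt F (f x) x) (hf : LipschitzWith K f) (ε : ℝ) (v w : ι → ℝ) :
    allenCahnEnergy A ε F (v + w) ≤ allenCahnEnergy A ε F v
      + (A *ᵥ v + (1 / ε ^ 2) • fun i => f (v i)) ⬝ᵥ w
      + 1 / 2 * (A *ᵥ w ⬝ᵥ w) + K / (2 * ε ^ 2) * (w ⬝ᵥ w) := by
  have hquad : A *ᵥ (v + w) ⬝ᵥ (v + w) = A *ᵥ v ⬝ᵥ v + 2 * (A *ᵥ v ⬝ᵥ w) + A *ᵥ w ⬝ᵥ w := by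
    rw [mulVec_add, add_dotProduct, dotProduct_add, dotProduct_add,
      hA.mulVec_dotProduct_comm w v]
    ring
  have hsum : ∑ i, F (v i + w i) ≤ ∑ i, F (v i) + (fun i => f (v i)) ⬝ᵥ w + K / 2 * (w ⬝ᵥ w) := by
    simp only [dotProduct, Finset.mul_sum, ← Finset.sum_add_distrib]
    gcongr with i
    have := sub_le_of_hasDerivAt_of_lipschitzWith hF hf (v i) (v i + w i)
    rw [add_sub_cancel_left] at this
    linear_combination this
  have hsum' := mul_le_mul_of_nonneg_left hsum (by positivity : (0 : ℝ) ≤ 1 / ε ^ 2)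
  simp only [allenCahnEnergy, Pi.add_apply, hquad, add_dotProduct, smul_dotProduct, smul_eq_mul]
  linear_combination hsum'

theorem stmt_11_general {n : ℕ} (A B : Matrix (Fin n) (Fin n) ℝ)
    (hA : A.PosSemidef)
    (α β : ℝ) (hβ : 0 < β)
    (hspec : ∀ v : Fin n → ℝ,
      α * (B.mulVec v ⬝ᵥ v) ≤ A.mulVec v ⬝ᵥ v ∧ A.mulVec v ⬝ᵥ v ≤ β * (B.mulVec v ⬝ᵥ v))
    (f F : ℝ → ℝ) (L : ℝ)
    (hF : ∀ x, HasDerivAt F (f x) x)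
    (hf : Differentiable ℝ f) (hL : ∀ x, |deriv f x| ≤ L)
    (ε τ Δt : ℝ)
    (ρA : ℝ) (hρ : IsGreatest {r : ℝ | ∃ v : Fin n → ℝ, v ≠ 0 ∧ A.mulVec v = r • v} ρA)
    (hτ0 : 0 ≤ τ) (hτ : τ < β / 2)
    (hΔt : 0 < Δt)
    (hΔt' : Δt < 1 / (L / (2 * ε ^ 2) - (τ / β - 1 / 2) * ρA))
    (u : ℕ → Fin n → ℝ)
    (hscheme : ∀ k, Δt⁻¹ • (u (k + 1) - u k)
      + τ • B.mulVec (u (k + 1) - u k) + A.mulVec (u k)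
      + (1 / ε ^ 2) • (fun i => f (u k i)) = 0)
    (E : (Fin n → ℝ) → ℝ)
    (hE : ∀ v, E v = (1 / 2) * (A.mulVec v ⬝ᵥ v) + (1 / ε ^ 2) * ∑ i, F (v i)) :
    ∀ k : ℕ, E (u (k + 1)) ≤ E (u k) := by
  have hL0 : 0 ≤ L := (abs_nonneg _).trans (hL 0)
  have hf_lip : LipschitzWith L.toNNReal f := lipschitzWith_of_nnnorm_deriv_le hf fun x => by
    rw [← NNReal.coe_le_coe, coe_nnnorm, Real.coe_toNNReal _ hL0]; exact hL x
  set c := L / (2 * ε ^ 2) - (τ / β - 1 / 2) * ρA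
  have hc : 0 < c := one_div_pos.1 (hΔt.trans hΔt')
  have hcΔt : c < Δt⁻¹ := by rw [← one_div]; exact (lt_one_div hΔt hc).1 hΔt'
  have hτβ : 0 ≤ 1 / 2 - τ / β := by rw [sub_nonneg, div_le_iff₀ hβ]; linarith
  rw [show E = allenCahnEnergy A ε F from funext hE]
  intro k
  set w := u (k + 1) - u k
  have hgrad : (A *ᵥ u k + (1 / ε ^ 2) • fun i => f (u k i)) = -(Δt⁻¹ • w + τ • B *ᵥ w) := by
    rw [eq_neg_iff_add_eq_zero, ← hscheme k]; abel
  have hAB : τ / β * (A *ᵥ w ⬝ᵥ w) ≤ τ * (B *ᵥ w ⬝ᵥ w) := by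
    have := mul_le_mul_of_nonneg_left (hspec w).2 (div_nonneg hτ0 hβ.le)
    rwa [← mul_assoc, div_mul_cancel₀ _ hβ.ne'] at this
  have hAρ := mul_le_mul_of_nonneg_left
    (hA.1.mulVec_dotProduct_le_of_mem_upperBounds hρ.2 w) hτβ
  have hstep := allenCahnEnergy_add_le hA.1 hF hf_lip ε (u k) w
  rw [add_sub_cancel, hgrad, Real.coe_toNNReal _ hL0] at hstep
  calc _ ≤ _ := hstep
    _ ≤ allenCahnEnergy A ε F (u k) - (Δt⁻¹ - c) * (w ⬝ᵥ w) := by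
      simp only [neg_dotProduct, add_dotProduct, smul_dotProduct, smul_eq_mul]
      linear_combination hAB + hAρ
    _ ≤ allenCahnEnergy A ε F (u k) :=
      sub_le_self _ (mul_nonneg (sub_nonneg.2 hcΔt.le) (dotProduct_self_star_nonneg w))

theorem stmt_11 {n : ℕ} (A B : Matrix (Fin n) (Fin n) ℝ)
    (hA : A.PosSemidef) (hB : B.PosSemidef)
    (hkerA : ∀ v : Fin n → ℝ, A.mulVec v = 0 → v = 0)
    (hkerB : ∀ v : Fin n → ℝ, B.mulVec v = 0 → v = 0)
    (α β : ℝ) (hα : 0 < α) (hβ : 0 < β)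
    (hspec : ∀ v : Fin n → ℝ,
      α * (B.mulVec v ⬝ᵥ v) ≤ A.mulVec v ⬝ᵥ v ∧ A.mulVec v ⬝ᵥ v ≤ β * (B.mulVec v ⬝ᵥ v))
    (f F : ℝ → ℝ) (L : ℝ)
    (hF : ∀ x, HasDerivAt F (f x) x)
    (hf : Differentiable ℝ f) (hL : ∀ x, |deriv f x| ≤ L)
    (ε τ Δt : ℝ) (hε : 0 < ε)
    (ρA : ℝ) (hρ : IsGreatest {r : ℝ | ∃ v : Fin n → ℝ, v ≠ 0 ∧ A.mulVec v = r • v} ρA)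
    (hτ0 : 0 ≤ τ) (hτ : τ < β / 2)
    (hΔt : 0 < Δt)
    (hΔt' : Δt < 1 / (L / (2 * ε ^ 2) - (τ / β - 1 / 2) * ρA))
    (u : ℕ → Fin n → ℝ)
    (hscheme : ∀ k, Δt⁻¹ • (u (k + 1) - u k)
      + τ • B.mulVec (u (k + 1) - u k) + A.mulVec (u k)
      + (1 / ε ^ 2) • (fun i => f (u k i)) = 0)
    (E : (Fin n → ℝ) → ℝ)
    (hE : ∀ v, E v = (1 / 2) * (A.mulVec v ⬝ᵥ v) + (1 / ε ^ 2) * ∑ i, F (v i)) :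
    ∀ k : ℕ, E (u (k + 1)) ≤ E (u k) :=
  stmt_11_general A B hA α β hβ hspec f F L hF hf hL ε τ Δt ρA hρ hτ0 hτ hΔt hΔt' u hscheme E hE
end
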